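/- arXiv:1106.1481 — 3 statements merged into one kernel-verified Lean document; each statement's English description precedes it below -/
import Mathlib

section
/- With the same hypotheses, the symmetric tensor g = -(1/2)F(I₀ + I₁) is compatible with both complex structures: g I₀ + I₀* g = 0 and g I₁ + I₁* g = 0. -/
open Module

/-- Under `F I₀ + I₀* F + F Q F = 0` with `I₁ = I₀ + QF`, the symmetric tensor
`g = -(1/2) F (I₀ + I₁)` is compatible with both complex structures:
`g I₀ + I₀* g = 0` and `g I₁ + I₁* g = 0`. -/
theorem g_compatible_both
    {V : Type*} [AddCommGroup V] [Module ℝ V] [FiniteDimensional ℝ V]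
    (I₀ : V →ₗ[ℝ] V) (hI₀ : I₀ ∘ₗ I₀ = -LinearMap.id)
    (Q : Dual ℝ V →ₗ[ℝ] V) (hQ : ∀ ξ η : Dual ℝ V, ξ (Q η) = - η (Q ξ))
    (F : V →ₗ[ℝ] Dual ℝ V) (hF : ∀ x y : V, F x y = - F y x)
    (heq : F ∘ₗ I₀ + I₀.dualMap ∘ₗ F + F ∘ₗ Q ∘ₗ F = 0)
    (I₁ : V →ₗ[ℝ] V) (hI₁ : I₁ = I₀ + Q ∘ₗ F)
    (g : V →ₗ[ℝ] Dual ℝ V) (hg : g = -((1/2 : ℝ) • (F ∘ₗ (I₀ + I₁)))) :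
    g ∘ₗ I₀ + I₀.dualMap ∘ₗ g = 0 ∧ g ∘ₗ I₁ + I₁.dualMap ∘ₗ g = 0 := by
  -- pointwise form of hI₀
  have hI₀' : ∀ x : V, I₀ (I₀ x) = -x := by
    intro x
    have := LinearMap.congr_fun hI₀ x
    simpa using this
  -- pointwise form of heq
  have h1 : ∀ x y : V, F (I₀ x) y + F x (I₀ y) + F (Q (F x)) y = 0 := by
    intro x y
    have := LinearMap.congr_fun (LinearMap.congr_fun heq x) y
    simpa [LinearMap.dualMap_apply] using this
  -- F (I₁ x) y = - F x (I₀ y)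
  have hA : ∀ x y : V, F (I₁ x) y = - F x (I₀ y) := by
    intro x y
    have h := h1 x y
    rw [hI₁]
    simp only [LinearMap.add_apply, LinearMap.comp_apply, map_add, LinearMap.add_apply]
    linarith
  -- F x (I₁ y) = - F (I₀ x) y
  have hB : ∀ x y : V, F x (I₁ y) = - F (I₀ x) y := by
    intro x y
    have h := h1 x y
    have hq : F x (Q (F y)) = - F y (Q (F x)) := hQ (F x) (F y)
    have hf : F y (Q (F x)) = - F (Q (F x)) y := hF y (Q (F x))
    rw [hI₁]
    simp only [LinearMap.add_apply, LinearMap.comp_apply, map_add]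
    linarith
  -- F (I₁ (I₁ x)) y = - F x y
  have hC : ∀ x y : V, F (I₁ (I₁ x)) y = - F x y := by
    intro x y
    have h1' := hA (I₁ x) y
    have h2' := hA x (I₀ y)
    rw [h1', h2', hI₀' y]
    simp
  constructor
  · ext x y
    simp only [LinearMap.add_apply, LinearMap.comp_apply, LinearMap.dualMap_apply,
      LinearMap.zero_apply, hg, LinearMap.neg_apply, LinearMap.smul_apply, map_add,
      LinearMap.add_apply, smul_eq_mul, Pi.neg_apply, Pi.smul_apply, Pi.add_apply]
    have e1 : F (I₀ (I₀ x)) y = - F x y := by rw [hI₀' x]; simp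
    have e2 : F (I₁ (I₀ x)) y = - F (I₀ x) (I₀ y) := hA (I₀ x) y
    have e3 : F (I₁ x) (I₀ y) = - F x (I₀ (I₀ y)) := hA x (I₀ y)
    have e4 : F x (I₀ (I₀ x)) = F x (I₀ (I₀ x)) := rfl
    rw [hI₀' y] at e3
    simp only [map_neg] at e3
    linarith
  · ext x y
    simp only [LinearMap.add_apply, LinearMap.comp_apply, LinearMap.dualMap_apply,
      LinearMap.zero_apply, hg, LinearMap.neg_apply, LinearMap.smul_apply, map_add,
      LinearMap.add_apply, smul_eq_mul, Pi.neg_apply, Pi.smul_apply, Pi.add_apply]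
    have e1 : F (I₁ (I₁ x)) y = - F x y := hC x y
    have e2 : F (I₀ x) (I₁ y) = - F (I₀ (I₀ x)) y := hB (I₀ x) y
    have e3 : F (I₁ x) (I₁ y) = - F (I₀ (I₁ x)) y := hB (I₁ x) y
    rw [hI₀' x] at e2
    simp only [map_neg, LinearMap.neg_apply, neg_neg] at e2
    linarith
end

section
/- Composition in the bi-Hermitian groupoid: let Q : V* → V be skew-symmetric, I₀ ∈ End(V) with I₀² = -1, and let F₀₁, F₁₂ : V → V* be skew-symmetric maps such that F₀₁ I₀ + I₀* F₀₁ + F₀₁ Q F₀₁ = 0 and, setting I₁ = I₀ + Q F₀₁, also F₁₂ I₁ + I₁* F₁₂ + F₁₂ Q F₁₂ = 0. Then F₀₂ := F₀₁ + F₁₂ satisfies F₀₂ I₀ + I₀* F₀₂ + F₀₂ Q F₀₂ = 0. -/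
open Module

/-- Composition in the bi-Hermitian groupoid: if `F₀₁` solves the equation for `I₀`
and `F₁₂` solves it for `I₁ = I₀ + Q F₀₁`, then `F₀₂ = F₀₁ + F₁₂` solves it for `I₀`. -/
theorem groupoid_composition
    {V : Type*} [AddCommGroup V] [Module ℝ V] [FiniteDimensional ℝ V]
    (I₀ : V →ₗ[ℝ] V) (hI₀ : I₀ ∘ₗ I₀ = -LinearMap.id)
    (Q : Dual ℝ V →ₗ[ℝ] V) (hQ : ∀ ξ η : Dual ℝ V, ξ (Q η) = - η (Q ξ))
    (F₀₁ F₁₂ : V →ₗ[ℝ] Dual ℝ V)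
    (hF₀₁ : ∀ x y : V, F₀₁ x y = - F₀₁ y x)
    (hF₁₂ : ∀ x y : V, F₁₂ x y = - F₁₂ y x)
    (heq01 : F₀₁ ∘ₗ I₀ + I₀.dualMap ∘ₗ F₀₁ + F₀₁ ∘ₗ Q ∘ₗ F₀₁ = 0)
    (I₁ : V →ₗ[ℝ] V) (hI₁ : I₁ = I₀ + Q ∘ₗ F₀₁)
    (heq12 : F₁₂ ∘ₗ I₁ + I₁.dualMap ∘ₗ F₁₂ + F₁₂ ∘ₗ Q ∘ₗ F₁₂ = 0) :
    (F₀₁ + F₁₂) ∘ₗ I₀ + I₀.dualMap ∘ₗ (F₀₁ + F₁₂)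
      + (F₀₁ + F₁₂) ∘ₗ Q ∘ₗ (F₀₁ + F₁₂) = 0 := by
  subst hI₁
  apply LinearMap.ext; intro x; apply LinearMap.ext; intro y
  have h1 := LinearMap.congr_fun (LinearMap.congr_fun heq01 x) y
  have h2 := LinearMap.congr_fun (LinearMap.congr_fun heq12 x) y
  simp only [LinearMap.add_apply, LinearMap.comp_apply, LinearMap.dualMap_apply,
    LinearMap.zero_apply, map_add] at h1 h2 ⊢
  have hcross : F₀₁ (Q (F₁₂ x)) y = F₁₂ x (Q (F₀₁ y)) := by
    rw [hF₀₁]; have := hQ (F₀₁ y) (F₁₂ x); linarith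
  linarith
end

section
/- If h = e^λ · w for a smooth function λ : ℂ² → ℂ, then all mixed antiholomorphic derivatives ∂^{p+q} h / ∂w̄^p ∂z̄^q vanish at the origin (0,0), for all p, q ∈ ℕ. -/
/-- The antiholomorphic Wirtinger derivative `∂/∂w̄` (first coordinate). -/
noncomputable def dwbar (f : ℂ × ℂ → ℂ) : ℂ × ℂ → ℂ := fun p =>
  (1 / 2 : ℂ) * (fderiv ℝ f p (1, 0) + Complex.I * fderiv ℝ f p (Complex.I, 0))

/-- The antiholomorphic Wirtinger derivative `∂/∂z̄` (second coordinate). -/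
noncomputable def dzbar (f : ℂ × ℂ → ℂ) : ℂ × ℂ → ℂ := fun p =>
  (1 / 2 : ℂ) * (fderiv ℝ f p (0, 1) + Complex.I * fderiv ℝ f p (0, Complex.I))

lemma smooth_dwbar (f : ℂ × ℂ → ℂ) (hf : ContDiff ℝ (⊤ : ℕ∞) f) : ContDiff ℝ (⊤ : ℕ∞) (dwbar f) := by
  have hd : ContDiff ℝ (⊤ : ℕ∞) (fderiv ℝ f) := hf.fderiv_right (le_refl _)
  exact contDiff_const.mul ((hd.clm_apply contDiff_const).add
    (contDiff_const.mul (hd.clm_apply contDiff_const)))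

lemma smooth_dzbar (f : ℂ × ℂ → ℂ) (hf : ContDiff ℝ (⊤ : ℕ∞) f) : ContDiff ℝ (⊤ : ℕ∞) (dzbar f) := by
  have hd : ContDiff ℝ (⊤ : ℕ∞) (fderiv ℝ f) := hf.fderiv_right (le_refl _)
  exact contDiff_const.mul ((hd.clm_apply contDiff_const).add
    (contDiff_const.mul (hd.clm_apply contDiff_const)))

lemma fderiv_mul_fst (g : ℂ × ℂ → ℂ) (hg : ContDiff ℝ (⊤ : ℕ∞) g) (x v : ℂ × ℂ) :
    fderiv ℝ (fun y : ℂ × ℂ => g y * y.1) x v = g x * v.1 + x.1 * fderiv ℝ g x v := by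
  have h1 : DifferentiableAt ℝ g x := hg.differentiable (by simp) x
  have h2 : DifferentiableAt ℝ (fun y : ℂ × ℂ => y.1) x := differentiableAt_fst
  have := fderiv_fun_mul (𝕜 := ℝ) h1 h2
  rw [this]
  have hfst : fderiv ℝ (fun y : ℂ × ℂ => y.1) x = ContinuousLinearMap.fst ℝ ℂ ℂ :=
    fderiv_fst
  simp [hfst, smul_eq_mul]

lemma dwbar_mul_fst (g : ℂ × ℂ → ℂ) (hg : ContDiff ℝ (⊤ : ℕ∞) g) :
    dwbar (fun y : ℂ × ℂ => g y * y.1) = fun y => dwbar g y * y.1 := by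
  funext x
  simp only [dwbar, fderiv_mul_fst g hg]
  ring_nf
  simp [Complex.I_sq]

lemma dzbar_mul_fst (g : ℂ × ℂ → ℂ) (hg : ContDiff ℝ (⊤ : ℕ∞) g) :
    dzbar (fun y : ℂ × ℂ => g y * y.1) = fun y => dzbar g y * y.1 := by
  funext x
  simp only [dzbar, fderiv_mul_fst g hg]
  ring

/-- If `h = e^λ · w` for a smooth `λ : ℂ² → ℂ`, then all mixed antiholomorphic
derivatives `∂^{p+q} h / ∂w̄^p ∂z̄^q` vanish at the origin, for all `p, q ∈ ℕ`. -/
theorem exp_mul_w_antiholomorphic_derivs_vanish (l : ℂ × ℂ → ℂ)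
    (hl : ContDiff ℝ (⊤ : ℕ∞) l) :
    ∀ p q : ℕ, (dwbar^[p] (dzbar^[q] (fun x : ℂ × ℂ => Complex.exp (l x) * x.1))) 0 = 0 := by
  -- invariant: the function has the form g · w with g smooth
  set P : (ℂ × ℂ → ℂ) → Prop :=
    fun h => ∃ g : ℂ × ℂ → ℂ, ContDiff ℝ (⊤ : ℕ∞) g ∧ h = fun y => g y * y.1 with hP
  have hbase : P (fun x : ℂ × ℂ => Complex.exp (l x) * x.1) :=
    ⟨fun x => Complex.exp (l x), (Complex.contDiff_exp (𝕜 := ℝ)).comp hl, rfl⟩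
  have hstepw : ∀ h, P h → P (dwbar h) := by
    rintro h ⟨g, hg, rfl⟩
    exact ⟨dwbar g, smooth_dwbar g hg, dwbar_mul_fst g hg⟩
  have hstepz : ∀ h, P h → P (dzbar h) := by
    rintro h ⟨g, hg, rfl⟩
    exact ⟨dzbar g, smooth_dzbar g hg, dzbar_mul_fst g hg⟩
  intro p q
  have hq : P (dzbar^[q] (fun x : ℂ × ℂ => Complex.exp (l x) * x.1)) := by
    induction q with
    | zero => exact hbase
    | succ n ih => rw [Function.iterate_succ_apply']; exact hstepz _ ih
  have hpq : P (dwbar^[p] (dzbar^[q] (fun x : ℂ × ℂ => Complex.exp (l x) * x.1))) := by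
    induction p with
    | zero => exact hq
    | succ n ih => rw [Function.iterate_succ_apply']; exact hstepw _ ih
  obtain ⟨g, _, hgeq⟩ := hpq
  rw [hgeq]
  simp
end
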